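/- arXiv:math/9912160 — 6 statements merged into one kernel-verified Lean document; each statement's English description precedes it below -/
import Mathlib

section
/- Let A be a uniform algebra on a compact Hausdorff space X and let x ∈ X be a point of continuity for A (i.e., there is no y ∈ X \ {x} with J_y ⊆ M_x, where M_x is the ideal of functions vanishing at x and J_y the ideal of functions vanishing on a neighbourhood of y). Then the only Jensen measure for the evaluation character at x supported on X is the point mass δ_x. -/
open MeasureTheory

/-- Key step: if `g` vanishes on an open set `V` but not at `x`, and `μ` satisfies the
Jensen inequalities for `g`, then `μ V = 0`. -/
lemma jensen_null_of_vanishes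
    {X : Type*} [TopologicalSpace X] [CompactSpace X] [T2Space X]
    [MeasurableSpace X] [BorelSpace X]
    (x : X) (μ : Measure X) [IsProbabilityMeasure μ]
    (g : C(X, ℂ)) (V : Set X) (hVo : IsOpen V)
    (hg0 : ∀ z ∈ V, g z = 0) (hgx : g x ≠ 0)
    (hJ : ∀ c : ℝ, 0 < c →
      ‖g x‖ ≤ Real.exp (∫ z, Real.log (max ‖g z‖ c) ∂μ)) :
    μ V = 0 := by
  by_contra hV
  have ht : 0 < (μ V).toReal :=
    ENNReal.toReal_pos hV (measure_ne_top μ V)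
  set t : ℝ := (μ V).toReal with ht_def
  set B : ℝ := Real.log (max ‖g‖ 1) with hB_def
  have hB : 0 ≤ B := Real.log_nonneg (le_max_right _ _)
  have hgx0 : 0 < ‖g x‖ := norm_pos_iff.mpr hgx
  set L : ℝ := (Real.log ‖g x‖ - B) / t with hL_def
  set c : ℝ := Real.exp (min (L - 1) (-1)) with hc_def
  have hc : 0 < c := Real.exp_pos _
  have hc1 : c ≤ 1 := Real.exp_le_one_iff.mpr (le_trans (min_le_right _ _) (by norm_num))
  have hlogc : Real.log c = min (L - 1) (-1) := Real.log_exp _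
  -- the integrand
  set φ : X → ℝ := fun z => Real.log (max ‖g z‖ c) with hφ_def
  have hφc : Continuous φ := by
    apply Continuous.log
    · exact (continuous_norm.comp g.continuous).max continuous_const
    · intro z
      exact ne_of_gt (lt_of_lt_of_le hc (le_max_right _ _))
  have hint : Integrable φ μ :=
    hφc.integrable_of_hasCompactSupport (HasCompactSupport.of_compactSpace _)
  -- split the integral
  have hsplit : (∫ z in V, φ z ∂μ) + (∫ z in Vᶜ, φ z ∂μ) = ∫ z, φ z ∂μ :=
    integral_add_compl hVo.measurableSet hint
  have hIV : (∫ z in V, φ z ∂μ) = t * Real.log c := by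
    have : (∫ z in V, φ z ∂μ) = ∫ _ in V, Real.log c ∂μ := by
      refine setIntegral_congr_fun hVo.measurableSet fun z hz => ?_
      simp [hφ_def, hg0 z hz, max_eq_right hc.le]
    rw [this, setIntegral_const, smul_eq_mul]; rfl
  have hIVc : (∫ z in Vᶜ, φ z ∂μ) ≤ B := by
    have h1 : (∫ z in Vᶜ, φ z ∂μ) ≤ ∫ _ in Vᶜ, B ∂μ := by
      refine setIntegral_mono_on (hint.integrableOn) (integrableOn_const ?_)
        hVo.measurableSet.compl fun z _ => ?_
      · exact measure_ne_top μ _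
      · refine Real.log_le_log (lt_of_lt_of_le hc (le_max_right _ _)) ?_
        exact max_le_max (g.norm_coe_le_norm z) hc1
    have h2 : (∫ _ in Vᶜ, B ∂μ) = (μ Vᶜ).toReal * B := by
      rw [setIntegral_const, smul_eq_mul]; rfl
    have h3 : (μ Vᶜ).toReal ≤ 1 := by
      have := prob_le_one (μ := μ) (s := Vᶜ)
      simpa using ENNReal.toReal_mono (by norm_num) this
    calc (∫ z in Vᶜ, φ z ∂μ) ≤ (μ Vᶜ).toReal * B := by rw [← h2]; exact h1
      _ ≤ 1 * B := by nlinarith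
      _ = B := one_mul B
  have hI : (∫ z, φ z ∂μ) ≤ t * Real.log c + B := by
    rw [← hsplit, hIV]; linarith
  have hJc := hJ c hc
  have hlog : Real.log ‖g x‖ ≤ t * Real.log c + B := by
    have : ‖g x‖ ≤ Real.exp (t * Real.log c + B) :=
      le_trans hJc (Real.exp_le_exp.mpr hI)
    exact (Real.log_le_iff_le_exp hgx0).mpr this
  -- derive a contradiction
  have hL : L ≤ Real.log c := by
    rw [hL_def, div_le_iff₀ ht]
    linarith [hlog]
  have : Real.log c ≤ L - 1 := hlogc ▸ min_le_left _ _
  linarith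

/-- If `x` is a point of continuity for the uniform algebra `A` (no `y ≠ x` has
`J_y ⊆ M_x`), then the only Jensen measure for the evaluation character at `x`
supported on `X` is the point mass at `x`. -/
theorem jensen_trivial_at_point_of_continuity
    {X : Type*} [TopologicalSpace X] [CompactSpace X] [T2Space X]
    [MeasurableSpace X] [BorelSpace X]
    (A : Subalgebra ℂ C(X, ℂ))
    (hclosed : IsClosed (A : Set C(X, ℂ)))
    (hsep : ∀ x y : X, x ≠ y → ∃ f ∈ A, f x ≠ f y)
    (x : X)
    (hcont : ∀ y : X, y ≠ x → ∃ f ∈ A,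
      (∃ U ∈ nhds y, ∀ z ∈ U, f z = 0) ∧ f x ≠ 0)
    (μ : Measure X) (hprob : IsProbabilityMeasure μ) (hreg : μ.Regular)
    (hJensen : ∀ f ∈ A, ∀ c : ℝ, 0 < c →
      ‖f x‖ ≤ Real.exp (∫ z, Real.log (max ‖f z‖ c) ∂μ)) :
    μ = Measure.dirac x := by
  -- every point `y ≠ x` has an open null neighbourhood
  have hnull : ∀ y : X, y ≠ x → ∃ V : Set X, IsOpen V ∧ y ∈ V ∧ μ V = 0 := by
    intro y hy
    obtain ⟨f, hfA, ⟨U, hU, hfU⟩, hfx⟩ := hcont y hy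
    obtain ⟨V, hVU, hVo, hyV⟩ := mem_nhds_iff.mp hU
    refine ⟨V, hVo, hyV, ?_⟩
    exact jensen_null_of_vanishes x μ f V hVo (fun z hz => hfU z (hVU hz)) hfx
      (hJensen f hfA)
  -- hence `μ ({x}ᶜ) = 0` via inner regularity
  have hcompl : μ ({x}ᶜ) = 0 := by
    have hKnull : ∀ K : Set X, IsCompact K → K ⊆ {x}ᶜ → μ K = 0 := by
      intro K hK hKx
      choose V hVo hyV hVnull using fun y (hy : y ∈ K) => hnull y (hKx hy)
      obtain ⟨s, hcover⟩ := hK.elim_nhds_subcover' V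
        (fun y hy => (hVo y hy).mem_nhds (hyV y hy))
      refine measure_mono_null hcover ?_
      exact (measure_biUnion_null_iff s.countable_toSet).mpr fun y _ => hVnull y y.2
    have := hreg.innerRegular.measure_eq_iSup (isOpen_compl_singleton (x := x))
    rw [this]
    simp only [ENNReal.iSup_eq_zero]
    intro K
    by_cases h1 : K ⊆ {x}ᶜ
    · by_cases h2 : IsCompact K
      · simp [h1, h2, hKnull K h2 h1]
      · simp [h2]
    · simp [h1]
  -- conclude `μ = dirac x`
  have hx1 : μ {x} = 1 := by
    have := measure_add_measure_compl (μ := μ) (s := {x}) (measurableSet_singleton x)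
    rw [hcompl, add_zero] at this
    simpa using this
  ext s hs
  rw [Measure.dirac_apply' x hs]
  by_cases hxs : x ∈ s
  · have h1 : (1 : ENNReal) ≤ μ s := hx1 ▸ measure_mono (Set.singleton_subset_iff.mpr hxs)
    have h2 : μ s ≤ 1 := prob_le_one
    simp [le_antisymm h2 h1, Set.indicator_of_mem hxs]
  · have hsub : s ⊆ {x}ᶜ := fun z hz h =>
      hxs (Set.mem_singleton_iff.mp h ▸ hz)
    have : μ s = 0 := measure_mono_null hsub hcompl
    simp [this, Set.indicator_of_notMem hxs]
end

section
/- Let A be a uniform algebra on a compact Hausdorff space X with X equal to the character space of A. Then A is regular (for every closed set E ⊆ X and every x ∈ X \ E there exists f ∈ A with f(x) = 1 and f ≡ 0 on E) if and only if every point of X is a point of continuity for A (i.e., for all distinct x, y ∈ X, J_y is not contained in M_x). -/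
/-!
Regularity gives a function vanishing on a closed neighbourhood of `y` that misses `x`.
Conversely, if every `y ∈ E` has a function vanishing near `y` but not at `x`, compactness of `E`
lets us multiply finitely many of them into one vanishing on all of `E`, and rescale it to be `1`
at `x`.
-/

open Topology

section

variable {X 𝕜 : Type*} [TopologicalSpace X]

section CommRing

variable [CommRing 𝕜] [TopologicalSpace 𝕜] [IsTopologicalRing 𝕜] (A : Subalgebra 𝕜 C(X, 𝕜))

theorem Subalgebra.exists_mem_eventually_zero_of_regular [RegularSpace X] [T1Space X]
    [Nontrivial 𝕜]
    (hreg : ∀ E : Set X, IsClosed E → ∀ x ∉ E, ∃ f ∈ A, f x = 1 ∧ ∀ z ∈ E, f z = 0)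
    {x y : X} (hxy : x ≠ y) :
    ∃ f ∈ A, (∃ U ∈ 𝓝 y, ∀ z ∈ U, f z = 0) ∧ f x ≠ 0 := by
  obtain ⟨V, hV, hVclosed, hVx⟩ :=
    exists_mem_nhds_isClosed_subset (isOpen_compl_singleton.mem_nhds hxy.symm)
  obtain ⟨f, hfA, hfx, hfV⟩ := hreg V hVclosed x fun hx ↦ hVx hx rfl
  exact ⟨f, hfA, ⟨V, hV, hfV⟩, hfx ▸ one_ne_zero⟩

theorem Subalgebra.exists_mem_eqOn_zero_of_isCompact [IsDomain 𝕜] {K : Set X}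
    (hK : IsCompact K) {x : X}
    (h : ∀ y ∈ K, ∃ f ∈ A, (∃ U ∈ 𝓝 y, ∀ z ∈ U, f z = 0) ∧ f x ≠ 0) :
    ∃ f ∈ A, f x ≠ 0 ∧ ∀ z ∈ K, f z = 0 := by
  refine hK.induction_on (p := fun s ↦ ∃ f ∈ A, f x ≠ 0 ∧ ∀ z ∈ s, f z = 0) ?_ ?_ ?_ ?_
  · exact ⟨1, A.one_mem, one_ne_zero, fun _ h ↦ h.elim⟩
  · rintro s t hst ⟨f, hfA, hfx, hft⟩
    exact ⟨f, hfA, hfx, fun z hz ↦ hft z (hst hz)⟩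
  · rintro s t ⟨f, hfA, hfx, hfs⟩ ⟨g, hgA, hgx, hgt⟩
    refine ⟨f * g, A.mul_mem hfA hgA, mul_ne_zero hfx hgx, ?_⟩
    rintro z (hz | hz)
    · simp [hfs z hz]
    · simp [hgt z hz]
  · intro y hy
    obtain ⟨f, hfA, ⟨U, hU, hfU⟩, hfx⟩ := h y hy
    exact ⟨U, mem_nhdsWithin_of_mem_nhds hU, f, hfA, hfx, hfU⟩

end CommRing

theorem Subalgebra.regular_of_forall_exists_mem_eventually_zero [CompactSpace X]
    [Field 𝕜] [TopologicalSpace 𝕜] [IsTopologicalRing 𝕜] (A : Subalgebra 𝕜 C(X, 𝕜))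
    (h : ∀ x y : X, x ≠ y → ∃ f ∈ A, (∃ U ∈ 𝓝 y, ∀ z ∈ U, f z = 0) ∧ f x ≠ 0)
    (E : Set X) (hE : IsClosed E) (x : X) (hx : x ∉ E) :
    ∃ f ∈ A, f x = 1 ∧ ∀ z ∈ E, f z = 0 := by
  obtain ⟨g, hgA, hgx, hgE⟩ := A.exists_mem_eqOn_zero_of_isCompact hE.isCompact
    fun y hy ↦ h x y (ne_of_mem_of_not_mem hy hx).symm
  refine ⟨(g x)⁻¹ • g, A.smul_mem hgA _, inv_mul_cancel₀ hgx, fun z hz ↦ ?_⟩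
  simp [hgE z hz]

end

theorem regular_iff_every_point_of_continuity_general
    {X : Type*} [TopologicalSpace X] [CompactSpace X] [T2Space X]
    (A : Subalgebra ℂ C(X, ℂ)) :
    (∀ E : Set X, IsClosed E → ∀ x ∉ E, ∃ f ∈ A, f x = 1 ∧ ∀ z ∈ E, f z = 0) ↔
    (∀ x y : X, x ≠ y → ∃ f ∈ A, (∃ U ∈ nhds y, ∀ z ∈ U, f z = 0) ∧ f x ≠ 0) :=
  ⟨fun hreg _ _ hxy ↦ A.exists_mem_eventually_zero_of_regular hreg hxy,
    A.regular_of_forall_exists_mem_eventually_zero⟩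

/-- For a uniform algebra `A` on a compact Hausdorff space `X` equal to the
character space of `A`, regularity of `A` is equivalent to every point of `X`
being a point of continuity for `A`. -/
theorem regular_iff_every_point_of_continuity
    {X : Type*} [TopologicalSpace X] [CompactSpace X] [T2Space X]
    (A : Subalgebra ℂ C(X, ℂ))
    (hclosed : IsClosed (A : Set C(X, ℂ)))
    (hsep : ∀ x y : X, x ≠ y → ∃ f ∈ A, f x ≠ f y)
    (hchar : ∀ φ : A →ₐ[ℂ] ℂ, ∃ x : X, ∀ f : A, φ f = (f : C(X, ℂ)) x) :
    (∀ E : Set X, IsClosed E → ∀ x ∉ E, ∃ f ∈ A, f x = 1 ∧ ∀ z ∈ E, f z = 0) ↔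
    (∀ x y : X, x ≠ y → ∃ f ∈ A, (∃ U ∈ nhds y, ∀ z ∈ U, f z = 0) ∧ f x ≠ 0) :=
  regular_iff_every_point_of_continuity_general A
end

section
/- If A is a regular uniform algebra on a compact Hausdorff space X = Φ_A, then the only Jensen measures for characters of A supported on X are point masses. -/
open MeasureTheory

/-- If `A` is a regular uniform algebra on a compact Hausdorff space `X = Φ_A`,
then the only Jensen measures for characters of `A` supported on `X` are point
masses. -/
theorem regular_implies_jensen_trivial
    {X : Type*} [TopologicalSpace X] [CompactSpace X] [T2Space X]
    [MeasurableSpace X] [BorelSpace X]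
    (A : Subalgebra ℂ C(X, ℂ))
    (hclosed : IsClosed (A : Set C(X, ℂ)))
    (hsep : ∀ x y : X, x ≠ y → ∃ f ∈ A, f x ≠ f y)
    (hchar : ∀ φ : A →ₐ[ℂ] ℂ, ∃ x : X, ∀ f : A, φ f = (f : C(X, ℂ)) x)
    (hregular : ∀ E : Set X, IsClosed E → ∀ x ∉ E,
      ∃ f ∈ A, f x = 1 ∧ ∀ z ∈ E, f z = 0) :
    ∀ (φ : A →ₐ[ℂ] ℂ) (μ : Measure X), IsProbabilityMeasure μ → μ.Regular →
      (∀ f : A, ∀ c : ℝ, 0 < c →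
        ‖φ f‖ ≤ Real.exp (∫ x, Real.log (max ‖(f : C(X, ℂ)) x‖ c) ∂μ)) →
      ∃ x : X, (∀ f : A, φ f = (f : C(X, ℂ)) x) ∧ μ = Measure.dirac x := by
  intro φ μ hprob hregμ hjensen
  obtain ⟨x, hx⟩ := hchar φ
  refine ⟨x, hx, ?_⟩
  have hcompl : μ {x}ᶜ = 0 := by
    by_contra hne
    have hopen : IsOpen ({x}ᶜ : Set X) := isOpen_compl_singleton
    have h0 : (0 : ENNReal) < μ {x}ᶜ := pos_iff_ne_zero.mpr hne
    obtain ⟨K, hKsub, hKcomp, hKpos⟩ := hregμ.innerRegular hopen 0 h0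
    have hKmeas : MeasurableSet K := hKcomp.isClosed.measurableSet
    have hxK : x ∉ K := fun h => hKsub h rfl
    obtain ⟨f, hfA, hfx, hfK⟩ := hregular K hKcomp.isClosed x hxK
    set M : ℝ := ‖f‖ with hM
    have hM1 : (1 : ℝ) ≤ M := by
      have := f.norm_coe_le_norm x
      rw [hfx] at this
      simpa using this
    have hM0 : (0 : ℝ) < M := lt_of_lt_of_le one_pos hM1
    have hMlog : 0 ≤ Real.log M := Real.log_nonneg hM1
    set μK : ℝ := (μ K).toReal with hμKdef
    have hμKpos : 0 < μK :=
      ENNReal.toReal_pos (ne_of_gt hKpos) (measure_ne_top μ K)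
    set c : ℝ := Real.exp (-(Real.log M + 1) / μK) with hc
    have hc0 : 0 < c := Real.exp_pos _
    have hc1 : c ≤ 1 := by
      rw [hc]
      have : -(Real.log M + 1) / μK ≤ 0 := by
        apply div_nonpos_of_nonpos_of_nonneg <;> linarith
      calc Real.exp (-(Real.log M + 1) / μK) ≤ Real.exp 0 := Real.exp_le_exp.mpr this
        _ = 1 := Real.exp_zero
    have hcM : c ≤ M := hc1.trans hM1
    -- Jensen's inequality for f and c
    have hJ := hjensen ⟨f, hfA⟩ c hc0
    have hφf : ‖φ ⟨f, hfA⟩‖ = 1 := by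
      rw [hx ⟨f, hfA⟩]
      show ‖f x‖ = 1
      rw [hfx]; simp
    rw [hφf] at hJ
    have hJ0 : 0 ≤ ∫ z, Real.log (max ‖f z‖ c) ∂μ := by
      by_contra hcon
      push_neg at hcon
      have := Real.exp_lt_one_iff.mpr hcon
      have : Real.exp (∫ z, Real.log (max ‖f z‖ c) ∂μ) < 1 := this
      exact absurd (lt_of_le_of_lt hJ this) (lt_irrefl _)
    -- the integrand is continuous, hence integrable
    have hgcont : Continuous fun z => Real.log (max ‖f z‖ c) := by
      have h1 : Continuous fun z => max ‖f z‖ c :=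
        (f.continuous.norm).max continuous_const
      exact h1.log fun z => ne_of_gt (lt_of_lt_of_le hc0 (le_max_right _ _))
    have hgint : Integrable (fun z => Real.log (max ‖f z‖ c)) μ :=
      hgcont.integrable_of_hasCompactSupport
        (HasCompactSupport.of_compactSpace _)
    -- the dominating simple function
    set h : X → ℝ := fun z =>
      K.indicator (fun _ => Real.log c) z + Kᶜ.indicator (fun _ => Real.log M) z
      with hhdef
    have hhint : Integrable h μ :=
      ((integrable_const _).indicator hKmeas).add
        ((integrable_const _).indicator hKmeas.compl)
    have hle : ∀ z, Real.log (max ‖f z‖ c) ≤ h z := by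
      intro z
      by_cases hz : z ∈ K
      · rw [hhdef]
        simp only [Set.indicator_of_mem hz, Set.indicator_of_notMem
          (by simpa using hz : z ∉ Kᶜ), add_zero]
        rw [hfK z hz]
        simp [max_eq_right hc0.le]
      · rw [hhdef]
        simp only [Set.indicator_of_notMem hz, Set.indicator_of_mem
          (by simpa using hz : z ∈ Kᶜ), zero_add]
        apply Real.log_le_log (lt_of_lt_of_le hc0 (le_max_right _ _))
        exact max_le (f.norm_coe_le_norm z) hcM
    have hmono : ∫ z, Real.log (max ‖f z‖ c) ∂μ ≤ ∫ z, h z ∂μ :=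
      integral_mono hgint hhint hle
    have hinth : ∫ z, h z ∂μ =
        μK * Real.log c + (μ Kᶜ).toReal * Real.log M := by
      rw [hhdef, integral_add ((integrable_const _).indicator hKmeas)
        ((integrable_const _).indicator hKmeas.compl),
        integral_indicator_const _ hKmeas, integral_indicator_const _ hKmeas.compl]
      simp [mul_comm]
      rfl
    have hμKc1 : (μ Kᶜ).toReal ≤ 1 := by
      have h1 : μ Kᶜ ≤ 1 := prob_le_one
      calc (μ Kᶜ).toReal ≤ (1 : ENNReal).toReal :=
            ENNReal.toReal_mono (by simp) h1
        _ = 1 := by simp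
    have hlogc : μK * Real.log c = -(Real.log M + 1) := by
      rw [hc, Real.log_exp]
      field_simp
    have hbound : ∫ z, h z ∂μ ≤ -1 := by
      rw [hinth, hlogc]
      have : (μ Kᶜ).toReal * Real.log M ≤ 1 * Real.log M :=
        mul_le_mul_of_nonneg_right hμKc1 hMlog
      linarith
    linarith [hJ0, hmono, hbound]
  -- conclude μ = dirac x
  ext s hs
  rw [Measure.dirac_apply' x hs]
  by_cases hxs : x ∈ s
  · have hsc : μ sᶜ = 0 := by
      apply measure_mono_null _ hcompl
      intro z hz
      simp only [Set.mem_compl_iff, Set.mem_singleton_iff] at *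
      exact fun h => hz (h ▸ hxs)
    have h1 : μ s = 1 := by
      have hcmp := measure_compl hs (measure_ne_top μ s)
      rw [hsc, measure_univ] at hcmp
      exact le_antisymm prob_le_one (tsub_eq_zero_iff_le.mp hcmp.symm)
    rw [h1, Set.indicator_of_mem hxs]
    simp
  · have h0 : μ s = 0 := by
      apply measure_mono_null _ hcompl
      intro z hz
      simp only [Set.mem_compl_iff, Set.mem_singleton_iff]
      exact fun h => hxs (h ▸ hz)
    rw [h0, Set.indicator_of_notMem hxs]
end

section
/- For the disc algebra A(D̄) on the closed unit disc, for every point z of the unit circle, the only representing measure (hence the only Jensen measure) for evaluation at z supported on the closed disc is the point mass at z, yet no point of the closed unit disc is a point of continuity for A(D̄). -/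
open MeasureTheory Metric

/-- The closed unit disc in `ℂ`. -/
noncomputable def closedDisc : Set ℂ := Metric.closedBall 0 1

lemma re_div_two' (w : ℂ) : ((1 + w) / 2).re = (1 + w.re) / 2 := by
  have : ((1 + w) / 2) = (1 + w) * ((2⁻¹ : ℝ) : ℂ) := by
    push_cast; ring
  rw [this, Complex.re_mul_ofReal, Complex.add_re, Complex.one_re]
  ring

/-- The disc algebra: continuous functions on the closed unit disc which are
holomorphic on the open disc. -/
def discAlgebra : Set C(closedDisc, ℂ) :=
  {f | ∃ g : ℂ → ℂ, ContinuousOn g closedDisc ∧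
        DifferentiableOn ℂ g (Metric.ball (0 : ℂ) 1) ∧ ∀ x : closedDisc, f x = g x}

/-- For the disc algebra, the only representing measure for evaluation at a point
of the unit circle is the point mass, yet no point of the closed disc is a point
of continuity for the disc algebra. -/
theorem discAlgebra_circle_representing_trivial_but_no_point_of_continuity :
    (∀ (z : ℂ) (hz1 : ‖z‖ = 1) (hz : z ∈ closedDisc) (μ : Measure closedDisc),
      IsProbabilityMeasure μ → μ.Regular →
      (∀ f ∈ discAlgebra, f ⟨z, hz⟩ = ∫ x, f x ∂μ) →
      μ = Measure.dirac ⟨z, hz⟩) ∧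
    (∀ x : closedDisc, ¬ (∀ y : closedDisc, y ≠ x → ∃ f ∈ discAlgebra,
      (∃ U ∈ nhds y, ∀ w ∈ U, f w = 0) ∧ f x ≠ 0)) := by
  haveI : CompactSpace closedDisc :=
    isCompact_iff_compactSpace.mp (isCompact_closedBall (0 : ℂ) 1)
  have hnormle : ∀ x : closedDisc, ‖(x : ℂ)‖ ≤ 1 := by
    intro x
    have h : (x : ℂ) ∈ Metric.closedBall (0 : ℂ) 1 := x.2
    rwa [mem_closedBall, dist_zero_right] at h
  constructor
  · intro z hz1 hz μ hprob hreg hrep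
    set c : closedDisc := ⟨z, hz⟩ with hc
    -- the peaking function
    set g : ℂ → ℂ := fun w => (1 + (starRingEnd ℂ) z * w) / 2 with hgdef
    have hgc : Continuous g := by fun_prop
    have hgd : Differentiable ℂ g := by
      apply Differentiable.div_const
      exact (differentiable_const _).add ((differentiable_const _).mul differentiable_id)
    set f : C(closedDisc, ℂ) := ⟨fun x => g x, hgc.comp continuous_subtype_val⟩ with hfdef
    have hfA : f ∈ discAlgebra :=
      ⟨g, hgc.continuousOn, hgd.differentiableOn, fun x => rfl⟩
    have hzz : (starRingEnd ℂ) z * z = 1 := by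
      have habs : ‖z‖ = 1 := hz1
      have hns : Complex.normSq z = 1 := by
        rw [Complex.normSq_eq_norm_sq, habs]; norm_num
      rw [mul_comm, Complex.mul_conj, hns, Complex.ofReal_one]
    have hfz : f c = 1 := by
      simp only [hfdef, ContinuousMap.coe_mk, hgdef, hc, hzz]
      norm_num
    have hint : Integrable (fun x : closedDisc => f x) μ :=
      (map_continuous f).integrable_of_hasCompactSupport
        (IsCompact.of_isClosed_subset isCompact_univ (isClosed_tsupport _) (Set.subset_univ _))
    have hrepf : (1 : ℂ) = ∫ x, f x ∂μ := by rw [← hfz]; exact hrep f hfA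
    have hxnorm : ∀ x : closedDisc, ‖(starRingEnd ℂ) z * (x : ℂ)‖ ≤ 1 := by
      intro x
      rw [norm_mul]
      calc ‖(starRingEnd ℂ) z‖ * ‖(x:ℂ)‖ = ‖(x:ℂ)‖ := by
            rw [RCLike.norm_conj, hz1, one_mul]
        _ ≤ 1 := hnormle x
    -- the nonnegative function 1 - Re f
    set φ : closedDisc → ℝ := fun x => 1 - (f x).re with hφdef
    have hφnn : ∀ x, 0 ≤ φ x := by
      intro x
      have hre : ((starRingEnd ℂ) z * (x : ℂ)).re ≤ 1 :=
        le_trans (Complex.re_le_norm _) (hxnorm x)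
      simp only [hφdef, hfdef, ContinuousMap.coe_mk, hgdef]
      rw [re_div_two']
      linarith
    have hφint : Integrable φ μ := (integrable_const (1:ℝ)).sub hint.re
    have hφ0 : ∫ x, φ x ∂μ = 0 := by
      have h1 : ∫ x, (f x).re ∂μ = ((∫ x, f x ∂μ) : ℂ).re := by
        simpa using integral_re hint
      have h2 : ∫ x, φ x ∂μ = ∫ x, (1:ℝ) ∂μ - ∫ x, (f x).re ∂μ :=
        integral_sub (integrable_const 1) hint.re
      rw [h2, h1, ← hrepf]
      simp
    have hae : φ =ᵐ[μ] 0 :=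
      (integral_eq_zero_iff_of_nonneg (fun x => hφnn x) hφint).mp hφ0
    -- points other than c have φ ≠ 0
    have hφeq : ∀ x : closedDisc, φ x = 0 → x = c := by
      intro x hx
      have hre : ((starRingEnd ℂ) z * (x : ℂ)).re = 1 := by
        simp only [hφdef, hfdef, ContinuousMap.coe_mk, hgdef] at hx
        rw [re_div_two'] at hx
        linarith
      have hns : Complex.normSq ((starRingEnd ℂ) z * (x:ℂ)) ≤ 1 := by
        rw [Complex.normSq_eq_norm_sq]
        have h := hxnorm x
        nlinarith [norm_nonneg ((starRingEnd ℂ) z * (x:ℂ))]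
      rw [Complex.normSq_apply, hre] at hns
      have him : ((starRingEnd ℂ) z * (x:ℂ)).im = 0 :=
        mul_self_eq_zero.mp (le_antisymm (by linarith) (mul_self_nonneg _))
      have heq1 : (starRingEnd ℂ) z * (x : ℂ) = 1 :=
        Complex.ext (by simpa using hre) (by simpa using him)
      have hxz : (x : ℂ) = z := by
        have h := congrArg (fun w => z * w) heq1
        simpa [← mul_assoc, mul_comm z ((starRingEnd ℂ) z), hzz] using h
      exact Subtype.ext (by simp [hxz, hc])
    have hnull : μ {c}ᶜ = 0 := by
      have h0 : μ {x : closedDisc | ¬ φ x = 0} = 0 := by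
        have := hae
        rw [Filter.EventuallyEq, ae_iff] at this
        simpa using this
      refine measure_mono_null ?_ h0
      intro x hx hφx
      exact hx (hφeq x hφx)
    have hone : μ {c} = 1 := by
      have h := measure_add_measure_compl (μ := μ) (s := {c}) (measurableSet_singleton c)
      rw [hnull, add_zero] at h
      simpa using h
    ext s hs
    rw [Measure.dirac_apply' _ hs]
    by_cases hcs : c ∈ s
    · have h1 : μ s ≤ 1 := prob_le_one
      have h3 : μ {c} ≤ μ s := measure_mono (Set.singleton_subset_iff.mpr hcs)
      have h4 : μ s = 1 := le_antisymm h1 (hone ▸ h3)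
      simp [h4, Set.indicator_of_mem hcs]
    · have h4 : μ s = 0 := measure_mono_null (fun x hx => by
        simp only [Set.mem_compl_iff, Set.mem_singleton_iff]
        rintro rfl; exact hcs hx) hnull
      simp [h4, Set.indicator_of_notMem hcs]
  · intro x hx
    -- choose a point y in the open disc different from x
    obtain ⟨y0, hy0ball, hy0ne⟩ : ∃ y0 : ℂ, y0 ∈ ball (0:ℂ) 1 ∧ y0 ≠ (x : ℂ) := by
      by_cases h0 : (x : ℂ) = 0
      · refine ⟨((1/2 : ℝ) : ℂ), ?_, ?_⟩
        · rw [mem_ball, dist_zero_right, Complex.norm_real]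
          norm_num
        · rw [h0]
          norm_num
      · exact ⟨0, by simp [mem_ball], fun h => h0 h.symm⟩
    have hy0disc : y0 ∈ closedDisc := ball_subset_closedBall hy0ball
    set y : closedDisc := ⟨y0, hy0disc⟩ with hy
    have hyne : y ≠ x := fun h => hy0ne (congrArg Subtype.val h)
    obtain ⟨f, hfA, ⟨U, hU, hUf⟩, hfx⟩ := hx y hyne
    obtain ⟨g, hgcont, hgdiff, hfg⟩ := hfA
    -- g vanishes in a neighbourhood of y0
    rw [nhds_subtype_eq_comap, Filter.mem_comap] at hU
    obtain ⟨V, hV, hVU⟩ := hU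
    have hgV : g =ᶠ[nhds y0] 0 := by
      filter_upwards [Filter.inter_mem hV (isOpen_ball.mem_nhds hy0ball)] with w hw
      have hwdisc : w ∈ closedDisc := ball_subset_closedBall hw.2
      have hwU : (⟨w, hwdisc⟩ : closedDisc) ∈ U := hVU hw.1
      have := hUf _ hwU
      rw [hfg ⟨w, hwdisc⟩] at this
      simpa using this
    have hg0 : Set.EqOn g 0 (ball (0:ℂ) 1) :=
      (hgdiff.analyticOnNhd isOpen_ball).eqOn_zero_of_preconnected_of_eventuallyEq_zero
        (convex_ball (0:ℂ) 1).isPreconnected hy0ball hgV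
    -- f vanishes on the preimage of the ball, which is dense
    have hf0 : Set.EqOn (⇑f) 0 (Subtype.val ⁻¹' ball (0:ℂ) 1) := by
      intro w hw
      simp only [Set.mem_preimage] at hw
      simp [hfg w, hg0 hw]
    have hcl : x ∈ closure (Subtype.val ⁻¹' ball (0:ℂ) 1 : Set closedDisc) := by
      rw [closure_subtype]
      have himg : (Subtype.val '' (Subtype.val ⁻¹' ball (0:ℂ) 1 : Set closedDisc))
          = ball (0:ℂ) 1 := by
        rw [Subtype.image_preimage_coe]
        exact Set.inter_eq_right.mpr ball_subset_closedBall
      rw [himg, closure_ball (0:ℂ) one_ne_zero]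
      exact x.2
    exact hfx (hf0.closure (map_continuous f) continuous_const hcl)
end

section
/- Let A be a uniform algebra on a compact Hausdorff space X = Φ_A and x ∈ X. Then x is a peak point for A if and only if the maximal ideal M_x has a bounded approximate identity, provided X is metrizable. -/
open Filter Metric

section Aux

variable {X : Type*} [TopologicalSpace X] [CompactSpace X] [T2Space X]

/-- From separation, a function in `A` vanishing at `x` and equal to `1` at `y`. -/
private lemma exists_pointed (A : Subalgebra ℂ C(X, ℂ))
    (hsep : ∀ x y : X, x ≠ y → ∃ f ∈ A, f x ≠ f y) (x : X) {y : X} (hy : y ≠ x) :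
    ∃ f : C(X, ℂ), f ∈ A ∧ f x = 0 ∧ f y = 1 := by
  obtain ⟨g, hg, hne⟩ := hsep y x hy
  have hsub : (g y - g x) ≠ 0 := sub_ne_zero.2 hne
  refine ⟨(g y - g x)⁻¹ • (g - algebraMap ℂ C(X, ℂ) (g x)), ?_, ?_, ?_⟩
  · exact A.smul_mem (A.sub_mem hg (A.algebraMap_mem _)) _
  · simp
  · simp [inv_mul_cancel₀ hsub]

/-- The key compactness lemma: some `e n` is uniformly close to `1` on a closed set
missing `x`. -/
private lemma exists_near_one (A : Subalgebra ℂ C(X, ℂ))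
    (hsep : ∀ x y : X, x ≠ y → ∃ f ∈ A, f x ≠ f y) (x : X)
    (e : ℕ → C(X, ℂ))
    (hai : ∀ f ∈ A, f x = 0 → Tendsto (fun n => ‖e n * f - f‖) atTop (nhds 0))
    (K : Set X) (hK : IsClosed K) (hxK : x ∉ K) :
    ∃ n, ∀ y ∈ K, ‖e n y - 1‖ ≤ 1 / 2 := by
  classical
  have hfy : ∀ y : K, ∃ f : C(X, ℂ), f ∈ A ∧ f x = 0 ∧ f (y : X) = 1 := by
    intro y
    have : (y : X) ≠ x := fun h => hxK (h ▸ y.2)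
    exact exists_pointed A hsep x this
  choose F hFA hFx hFy using hfy
  -- open cover
  set V : K → Set X := fun y => {z | (1 : ℝ) / 2 < ‖F y z‖} with hV
  have hVopen : ∀ y, IsOpen (V y) := by
    intro y
    exact isOpen_lt continuous_const ((F y).continuous.norm)
  have hKc : IsCompact K := hK.isCompact
  have hcover : K ⊆ ⋃ y : K, V y := by
    intro z hz
    refine Set.mem_iUnion.2 ⟨⟨z, hz⟩, ?_⟩
    simp only [hV, Set.mem_setOf_eq, hFy ⟨z, hz⟩]
    norm_num
  obtain ⟨t, ht⟩ := hKc.elim_finite_subcover V hVopen hcover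
  -- eventually all products are close
  have hev : ∀ᶠ n in atTop, ∀ y ∈ t, ‖e n * F y - F y‖ < 1 / 8 := by
    rw [Filter.eventually_all_finset]
    intro y _
    exact (hai (F y) (hFA y) (hFx y)).eventually_lt_const (by norm_num)
  obtain ⟨n, hn⟩ := hev.exists
  refine ⟨n, fun z hz => ?_⟩
  obtain ⟨y, hyt, hzy⟩ : ∃ y ∈ t, z ∈ V y := by
    have := ht hz
    simpa using this
  have h1 : (1 : ℝ) / 2 < ‖F y z‖ := hzy
  have h2 : ‖e n * F y - F y‖ < 1 / 8 := hn y hyt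
  have h3 : ‖(e n * F y - F y) z‖ ≤ ‖e n * F y - F y‖ :=
    ContinuousMap.norm_coe_le_norm _ _
  have h4 : (e n * F y - F y) z = (e n z - 1) * F y z := by
    simp [ContinuousMap.sub_apply, ContinuousMap.mul_apply]
    ring
  have h5 : ‖e n z - 1‖ * ‖F y z‖ < 1 / 8 := by
    rw [← norm_mul, ← h4]
    exact lt_of_le_of_lt h3 h2
  nlinarith [norm_nonneg (e n z - 1), norm_nonneg (F y z)]

end Aux

set_option maxHeartbeats 2000000 in
/-- For a uniform algebra `A` on a compact metrizable Hausdorff space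
`X = Φ_A`, a point `x` is a peak point for `A` if and only if the maximal ideal
`M_x` has a bounded approximate identity (a bounded sequence suffices, since
`X` is metrizable). -/
theorem peak_point_iff_bounded_approximate_identity
    {X : Type*} [TopologicalSpace X] [CompactSpace X] [T2Space X]
    [TopologicalSpace.MetrizableSpace X]
    (A : Subalgebra ℂ C(X, ℂ))
    (hclosed : IsClosed (A : Set C(X, ℂ)))
    (hsep : ∀ x y : X, x ≠ y → ∃ f ∈ A, f x ≠ f y)
    (hchar : ∀ φ : A →ₐ[ℂ] ℂ, ∃ x : X, ∀ f : A, φ f = (f : C(X, ℂ)) x)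
    (x : X) :
    (∃ f ∈ A, f x = 1 ∧ ∀ y : X, y ≠ x → ‖f y‖ < 1) ↔
    (∃ (C : ℝ) (e : ℕ → C(X, ℂ)),
      (∀ n, e n ∈ A ∧ (e n) x = 0 ∧ ‖e n‖ ≤ C) ∧
      ∀ f ∈ A, f x = 0 →
        Tendsto (fun n => ‖e n * f - f‖) atTop (nhds 0)) := by
  constructor
  · -- peak point ⟹ bounded approximate identity
    rintro ⟨f, hfA, hfx, hf⟩
    have hfle : ∀ y : X, ‖f y‖ ≤ 1 := by
      intro y
      rcases eq_or_ne y x with rfl | hy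
      · rw [hfx]; norm_num
      · exact (hf y hy).le
    refine ⟨2, fun n => 1 - f ^ n, fun n => ⟨?_, ?_, ?_⟩, ?_⟩
    · exact A.sub_mem A.one_mem (pow_mem hfA n)
    · simp [hfx]
    · have h1 : ‖f ^ n‖ ≤ 1 := by
        rw [ContinuousMap.norm_le _ zero_le_one]
        intro y
        simp only [ContinuousMap.pow_apply, norm_pow]
        exact pow_le_one₀ (norm_nonneg _) (hfle y)
      calc ‖(1 : C(X, ℂ)) - f ^ n‖ ≤ ‖(1 : C(X, ℂ))‖ + ‖f ^ n‖ := norm_sub_le _ _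
        _ ≤ 1 + 1 := by
            have : ‖(1 : C(X, ℂ))‖ = 1 := by
              have : Nonempty X := ⟨x⟩
              exact norm_one
            rw [this]; linarith
        _ = 2 := by norm_num
    · intro g hgA hgx
      have hkey : ∀ n, ‖(1 - f ^ n) * g - g‖ = ‖f ^ n * g‖ := by
        intro n
        have : (1 - f ^ n) * g - g = -(f ^ n * g) := by ring
        rw [this, norm_neg]
      simp only [hkey]
      rw [Metric.tendsto_atTop]
      intro ε hε
      set K : Set X := {y | ε / 2 ≤ ‖g y‖} with hKdef
      have hKclosed : IsClosed K := isClosed_le continuous_const (g.continuous.norm)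
      have hbound : ∀ (c : ℝ) (n : ℕ), 0 ≤ c → (∀ y ∈ K, ‖f y‖ ≤ c) →
          c ^ n * ‖g‖ ≤ ε / 2 → ‖f ^ n * g‖ ≤ ε / 2 := by
        intro c n hc hcK hcn
        rw [ContinuousMap.norm_le _ (by linarith)]
        intro y
        simp only [ContinuousMap.mul_apply, ContinuousMap.pow_apply, norm_mul, norm_pow]
        by_cases hy : y ∈ K
        · have hgyn : ‖g y‖ ≤ ‖g‖ := ContinuousMap.norm_coe_le_norm g y
          have hfyc : ‖f y‖ ≤ c := hcK y hy
          calc ‖f y‖ ^ n * ‖g y‖ ≤ c ^ n * ‖g‖ := by gcongr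
            _ ≤ ε / 2 := hcn
        · have : ‖g y‖ < ε / 2 := by
            simp only [hKdef, Set.mem_setOf_eq, not_le] at hy
            exact hy
          have hfy1 : ‖f y‖ ^ n ≤ 1 := pow_le_one₀ (norm_nonneg _) (hfle y)
          calc ‖f y‖ ^ n * ‖g y‖ ≤ 1 * ‖g y‖ := by gcongr
            _ ≤ ε / 2 := by rw [one_mul]; linarith
      by_cases hKne : K.Nonempty
      · obtain ⟨y0, hy0K, hy0max⟩ :=
          hKclosed.isCompact.exists_isMaxOn hKne (f.continuous.norm.continuousOn)
        set c : ℝ := ‖f y0‖ with hc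
        have hy0x : y0 ≠ x := by
          intro h
          have : ε / 2 ≤ ‖g y0‖ := hy0K
          rw [h, hgx] at this
          simp at this
          linarith
        have hc1 : c < 1 := hf y0 hy0x
        have hc0 : 0 ≤ c := norm_nonneg _
        have htend : Tendsto (fun n => c ^ n * ‖g‖) atTop (nhds 0) := by
          have := (tendsto_pow_atTop_nhds_zero_of_lt_one hc0 hc1).mul_const ‖g‖
          rwa [zero_mul] at this
        obtain ⟨N, hN⟩ := (Metric.tendsto_atTop.1 htend) (ε / 2) (by linarith)
        refine ⟨N, fun n hn => ?_⟩
        have h1 : c ^ n * ‖g‖ ≤ ε / 2 := by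
          have := hN n hn
          rw [Real.dist_eq, sub_zero] at this
          have h2 : 0 ≤ c ^ n * ‖g‖ := by positivity
          rw [abs_of_nonneg h2] at this
          linarith
        have := hbound c n hc0 (fun y hy => hy0max hy) h1
        rw [Real.dist_eq, sub_zero, abs_of_nonneg (norm_nonneg _)]
        linarith
      · refine ⟨0, fun n _ => ?_⟩
        have hKe : ∀ y ∈ K, ‖f y‖ ≤ (0 : ℝ) := by
          intro y hy
          exact absurd ⟨y, hy⟩ hKne
        have h1 : (0 : ℝ) ^ n * ‖g‖ ≤ ε / 2 := by
          rcases Nat.eq_zero_or_pos n with rfl | hn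
          · -- n = 0 : but then K must be nonempty only if... handle directly
            simp only [pow_zero, one_mul]
            rw [ContinuousMap.norm_le _ (by linarith)]
            intro y
            by_contra hcon
            push_neg at hcon
            exact hKne ⟨y, le_of_lt hcon⟩
          · rw [zero_pow (by omega : n ≠ 0), zero_mul]; linarith
        have := hbound 0 n le_rfl hKe h1
        rw [Real.dist_eq, sub_zero, abs_of_nonneg (norm_nonneg _)]
        linarith
  · -- bounded approximate identity ⟹ peak point
    rintro ⟨C, e, he, hai⟩
    letI : MetricSpace X := TopologicalSpace.metrizableSpaceMetric X
    have hX : Nonempty X := ⟨x⟩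
    have hC0 : (0 : ℝ) ≤ C := le_trans (norm_nonneg _) (he 0).2.2
    set α : ℝ := (1 + C)⁻¹ with hαdef
    have h1C : (0 : ℝ) < 1 + C := by linarith
    have hα0 : 0 < α := by positivity
    have hα1 : α ≤ 1 := by
      rw [hαdef]
      rw [inv_le_one_iff₀]
      right; linarith
    set ρ : ℝ := 1 - α / 8 with hρdef
    have hρ0 : 0 < ρ := by rw [hρdef]; linarith
    have hρ1 : ρ < 1 := by rw [hρdef]; linarith
    have hρ78 : 7 / 8 ≤ ρ := by rw [hρdef]; linarith
    -- the building block
    have block : ∀ r : ℝ, 0 < r → ∃ h : C(X, ℂ), h ∈ A ∧ ‖h‖ ≤ 1 ∧ h x = (α : ℂ) ∧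
        ∀ y : X, ¬ dist y x < r → ‖h y‖ ≤ α / 2 := by
      intro r hr
      set K : Set X := {y | r ≤ dist y x} with hKdef
      have hKclosed : IsClosed K := isClosed_le continuous_const (continuous_id.dist continuous_const)
      have hxK : x ∉ K := by
        simp only [hKdef, Set.mem_setOf_eq, dist_self, not_le]
        exact hr
      obtain ⟨n, hn⟩ := exists_near_one A hsep x e hai K hKclosed hxK
      refine ⟨(α : ℂ) • (1 - e n), ?_, ?_, ?_, ?_⟩
      · exact A.smul_mem (A.sub_mem A.one_mem (he n).1) _
      · rw [norm_smul]
        have h1 : ‖(α : ℂ)‖ = α := by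
          rw [Complex.norm_real, Real.norm_of_nonneg hα0.le]
        have h2 : ‖(1 : C(X, ℂ)) - e n‖ ≤ 1 + C := by
          calc ‖(1 : C(X, ℂ)) - e n‖ ≤ ‖(1 : C(X, ℂ))‖ + ‖e n‖ := norm_sub_le _ _
            _ ≤ 1 + C := by
                have : ‖(1 : C(X, ℂ))‖ = 1 := norm_one
                rw [this]
                linarith [(he n).2.2]
        rw [h1, hαdef]
        calc (1 + C)⁻¹ * ‖(1 : C(X, ℂ)) - e n‖ ≤ (1 + C)⁻¹ * (1 + C) := by gcongr
          _ = 1 := by field_simp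
      · simp [(he n).2.1]
      · intro y hy
        have hyK : y ∈ K := by
          simp only [hKdef, Set.mem_setOf_eq]
          linarith [not_lt.1 hy]
        have h1 : ‖e n y - 1‖ ≤ 1 / 2 := hn y hyK
        simp only [ContinuousMap.smul_apply, ContinuousMap.sub_apply, ContinuousMap.one_apply]
        rw [norm_smul, Complex.norm_real, Real.norm_of_nonneg hα0.le]
        have : ‖(1 : ℂ) - e n y‖ = ‖e n y - 1‖ := by rw [norm_sub_rev]
        calc α * ‖(1 : ℂ) - e n y‖ = α * ‖e n y - 1‖ := by rw [this]
          _ ≤ α * (1 / 2) := by gcongr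
          _ = α / 2 := by ring
    -- totalized block
    have block' : ∀ r : ℝ, ∃ h : C(X, ℂ), 0 < r → h ∈ A ∧ ‖h‖ ≤ 1 ∧ h x = (α : ℂ) ∧
        ∀ y : X, ¬ dist y x < r → ‖h y‖ ≤ α / 2 := by
      intro r
      by_cases hr : 0 < r
      · obtain ⟨h, h1, h2, h3, h4⟩ := block r hr
        exact ⟨h, fun _ => ⟨h1, h2, h3, h4⟩⟩
      · exact ⟨1, fun h => absurd h hr⟩
    choose Hf hHf using block'
    -- radius chooser
    have next : ∀ (k : ℕ) (G : C(X, ℂ)), ∃ r : ℝ, 0 < r ∧ r ≤ 1 / (k + 1) ∧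
        ∀ y : X, dist y x < r → ‖G y - G x‖ ≤ ρ ^ (k + 1) / 2 := by
      intro k G
      have hG : ContinuousAt G x := G.continuous.continuousAt
      rw [Metric.continuousAt_iff] at hG
      obtain ⟨δ, hδ0, hδ⟩ := hG (ρ ^ (k + 1) / 2) (by positivity)
      refine ⟨min δ (1 / (k + 1)), ?_, min_le_right _ _, ?_⟩
      · apply lt_min hδ0
        positivity
      · intro y hy
        have : dist y x < δ := lt_of_lt_of_le hy (min_le_left _ _)
        have := hδ this
        rw [dist_eq_norm] at this
        linarith
    choose nextr hnext1 hnext2 hnext3 using next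
    -- recursive construction of (radius, partial sum) pairs
    obtain ⟨r, G, hr0, hG0, hGs, hrle, hdev⟩ :
        ∃ (r : ℕ → ℝ) (G : ℕ → C(X, ℂ)),
          (∀ k, 0 < r k) ∧ G 0 = 0 ∧
          (∀ k, G (k + 1) = G k + ((ρ : ℂ) ^ (k + 1)) • Hf (r k)) ∧
          (∀ k : ℕ, r (k + 1) ≤ 1 / (k + 2)) ∧
          (∀ k, ∀ y : X, dist y x < r k → ‖G k y - G k x‖ ≤ ρ ^ (k + 1) / 2) := by
      classical
      let step : ℕ → ℝ × C(X, ℂ) → ℝ × C(X, ℂ) := fun k p =>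
        (nextr (k + 1) (p.2 + ((ρ : ℂ) ^ (k + 1)) • Hf p.1),
          p.2 + ((ρ : ℂ) ^ (k + 1)) • Hf p.1)
      let σ : ℕ → ℝ × C(X, ℂ) := fun n => Nat.rec ((1 : ℝ), (0 : C(X, ℂ))) step n
      refine ⟨fun k => (σ k).1, fun k => (σ k).2, ?_, rfl, fun k => rfl, ?_, ?_⟩
      · intro k
        cases k with
        | zero => exact one_pos
        | succ k => exact hnext1 _ _
      · intro k
        have := hnext2 (k + 1) ((σ (k + 1)).2)
        convert this using 2
        push_cast
        ring
      · intro k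
        cases k with
        | zero =>
          intro y _
          show ‖(0 : C(X, ℂ)) y - (0 : C(X, ℂ)) x‖ ≤ ρ ^ (0 + 1) / 2
          simp only [ContinuousMap.zero_apply, sub_zero, norm_zero]
          positivity
        | succ k =>
          intro y hy
          exact hnext3 (k + 1) ((σ (k + 1)).2) y hy
    set h : ℕ → C(X, ℂ) := fun k => Hf (r k) with hhdef
    -- properties of h
    have hh : ∀ k, h k ∈ A ∧ ‖h k‖ ≤ 1 ∧ h k x = (α : ℂ) ∧
        ∀ y : X, ¬ dist y x < r k → ‖h k y‖ ≤ α / 2 := fun k => hHf (r k) (hr0 k)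
    -- partial sums
    have hGsum : ∀ k, G k = ∑ j ∈ Finset.range k, ((ρ : ℂ) ^ (j + 1)) • h j := by
      intro k
      induction k with
      | zero => simp [hG0]
      | succ k ih => rw [hGs k, ih, Finset.sum_range_succ]
    have hGmem : ∀ k, G k ∈ A := by
      intro k
      rw [hGsum k]
      exact Subalgebra.sum_mem A (fun j _ => A.smul_mem (hh j).1 _)
    -- the series
    set a : ℕ → C(X, ℂ) := fun k => ((ρ : ℂ) ^ (k + 1)) • h k with hadef
    have hanorm : ∀ k, ‖a k‖ ≤ ρ ^ (k + 1) := by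
      intro k
      rw [hadef]
      simp only [norm_smul, norm_pow, Complex.norm_real]
      rw [Real.norm_of_nonneg hρ0.le]
      calc ρ ^ (k + 1) * ‖h k‖ ≤ ρ ^ (k + 1) * 1 := by
            gcongr
            exact (hh k).2.1
        _ = ρ ^ (k + 1) := mul_one _
    have hgeom : Summable (fun k : ℕ => ρ ^ (k + 1)) := by
      have := (summable_geometric_of_lt_one hρ0.le hρ1)
      exact (summable_nat_add_iff 1).2 this |>.congr (fun k => by ring_nf)
    have hasum : Summable a := Summable.of_norm_bounded hgeom hanorm
    set F : C(X, ℂ) := ∑' k, a k with hFdef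
    have hFsum : HasSum a F := hasum.hasSum
    have hFA : F ∈ A := by
      refine hclosed.mem_of_tendsto hFsum.tendsto_sum_nat (Filter.Eventually.of_forall ?_)
      intro n
      have : ∑ i ∈ Finset.range n, a i = G n := (hGsum n).symm
      rw [this]
      exact hGmem n
    -- pointwise sums
    have hFy : ∀ y : X, HasSum (fun k => (ρ : ℂ) ^ (k + 1) * h k y) (F y) := by
      intro y
      have := hFsum.mapL (ContinuousMap.evalCLM ℂ y)
      convert this using 1
      rfl
      rfl
    -- value at x
    set s : ℝ := α * ρ / (1 - ρ) with hsdef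
    have hs0 : 0 < s := by
      rw [hsdef]
      have : 0 < 1 - ρ := by linarith
      positivity
    have hgeomsum : ∀ (c : ℝ), HasSum (fun k : ℕ => ρ ^ (k + 1) * c) (c * ρ / (1 - ρ)) := by
      intro c
      have h1 : HasSum (fun k : ℕ => ρ ^ k) (1 - ρ)⁻¹ :=
        hasSum_geometric_of_lt_one hρ0.le hρ1
      have h2 := h1.mul_left (ρ * c)
      have h3 : (fun k : ℕ => ρ * c * ρ ^ k) = fun k : ℕ => ρ ^ (k + 1) * c := by
        funext k; ring
      rw [h3] at h2
      convert h2 using 1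
      · rfl
      ring
    have hFx : F x = (s : ℂ) := by
      have h1 : HasSum (fun k => (ρ : ℂ) ^ (k + 1) * (α : ℂ)) (F x) := by
        have := hFy x
        convert this using 2 with k
        rw [(hh k).2.2.1]
      have h2 : HasSum (fun k : ℕ => ρ ^ (k + 1) * α) s := by
        rw [hsdef]; exact hgeomsum α
      have h3 : HasSum (fun k => (ρ : ℂ) ^ (k + 1) * (α : ℂ)) ((s : ℝ) : ℂ) := by
        have h4 := h2.mapL Complex.ofRealCLM
        have h5 : (fun k : ℕ => Complex.ofRealCLM (ρ ^ (k + 1) * α))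
            = fun k : ℕ => (ρ : ℂ) ^ (k + 1) * (α : ℂ) := by
          funext k
          simp only [Complex.ofRealCLM_apply]
          push_cast
          ring
        rwa [h5] at h4
      exact h1.unique h3
    -- the main estimate
    have hmain : ∀ y : X, y ≠ x → ‖F y‖ < s := by
      intro y hyx
      have hd0 : 0 < dist y x := dist_pos.2 hyx
      set S : Set ℕ := {k | dist y x < r k} with hSdef
      have hsmall : ∀ k, k ∉ S → ‖h k y‖ ≤ α / 2 := by
        intro k hk
        exact (hh k).2.2.2 y (by simpa [hSdef] using hk)
      have hay : Summable (fun k => (ρ : ℂ) ^ (k + 1) * h k y) := (hFy y).summable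
      by_cases hSne : S.Nonempty
      · -- S bounded above
        obtain ⟨M, hM⟩ := exists_nat_ge (1 / dist y x)
        have hbdd : BddAbove S := by
          refine ⟨M + 1, fun k hk => ?_⟩
          by_contra hcon
          push_neg at hcon
          obtain ⟨j, rfl⟩ : ∃ j, k = j + 1 := ⟨k - 1, by omega⟩
          have h1 : dist y x < 1 / (j + 2) := lt_of_lt_of_le hk (hrle j)
          have h2 : ((j : ℝ) + 2) < 1 / dist y x := by
            rw [lt_div_iff₀ hd0]
            rw [lt_div_iff₀ (by positivity : (0:ℝ) < (j : ℝ) + 2)] at h1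
            nlinarith
          have h3 : (M : ℝ) + 1 < (j : ℝ) + 1 := by exact_mod_cast hcon
          linarith
        set m : ℕ := sSup S with hmdef
        have hmS : m ∈ S := Nat.sSup_mem hSne hbdd
        have hmgt : ∀ k, m < k → k ∉ S := by
          intro k hk hkS
          exact absurd (le_csSup hbdd hkS) (not_le.2 hk)
        -- split the sum at m + 1
        have hsplit := Summable.sum_add_tsum_nat_add (m + 1) hay
        -- head
        have hhead : ∑ k ∈ Finset.range (m + 1), (ρ : ℂ) ^ (k + 1) * h k y
            = G m y + (ρ : ℂ) ^ (m + 1) * h m y := by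
          rw [Finset.sum_range_succ]
          congr 1
          rw [hGsum m, ContinuousMap.coe_sum, Finset.sum_apply]
          exact Finset.sum_congr rfl fun j _ => by
            simp [ContinuousMap.smul_apply, smul_eq_mul]
        -- tail bound
        have htailb : ‖∑' j : ℕ, (ρ : ℂ) ^ (j + (m + 1) + 1) * h (j + (m + 1)) y‖
            ≤ (α / 2) * ρ ^ (m + 2) / (1 - ρ) := by
          have hts : HasSum (fun j : ℕ => ρ ^ (j + m + 2) * (α / 2))
              ((α / 2) * ρ ^ (m + 2) / (1 - ρ)) := by
            have h1 : HasSum (fun j : ℕ => ρ ^ j) (1 - ρ)⁻¹ :=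
              hasSum_geometric_of_lt_one hρ0.le hρ1
            have h2 := h1.mul_left (ρ ^ (m + 2) * (α / 2))
            have h3 : (fun j : ℕ => ρ ^ (m + 2) * (α / 2) * ρ ^ j)
                = fun j : ℕ => ρ ^ (j + m + 2) * (α / 2) := by
              funext j
              ring
            rw [h3] at h2
            convert h2 using 1
            · rfl
            ring
          refine tsum_of_norm_bounded hts ?_
          intro j
          have hjm : j + (m + 1) ∉ S := hmgt _ (by omega)
          have h1 : ‖h (j + (m + 1)) y‖ ≤ α / 2 := hsmall _ hjm
          rw [norm_mul, norm_pow, Complex.norm_real, Real.norm_of_nonneg hρ0.le]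
          have : j + (m + 1) + 1 = j + m + 2 := by omega
          rw [this]
          gcongr
        -- assemble
        have hGmx : G m x = ((∑ j ∈ Finset.range m, ρ ^ (j + 1) * α : ℝ) : ℂ) := by
          rw [hGsum m, ContinuousMap.coe_sum, Finset.sum_apply, Complex.ofReal_sum]
          refine Finset.sum_congr rfl (fun j _ => ?_)
          simp only [ContinuousMap.smul_apply, smul_eq_mul, (hh j).2.2.1]
          push_cast
          ring
        set P : ℝ := ∑ j ∈ Finset.range m, ρ ^ (j + 1) * α with hPdef
        have hP0 : 0 ≤ P := by
          rw [hPdef]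
          refine Finset.sum_nonneg (fun j _ => ?_)
          positivity
        have hGmy : ‖G m y‖ ≤ P + ρ ^ (m + 1) / 2 := by
          have h1 := hdev m y hmS
          have h2 : ‖G m y‖ ≤ ‖G m x‖ + ‖G m y - G m x‖ := by
            have := norm_sub_norm_le (G m y) (G m x)
            have h3 := norm_le_insert' (G m y) (G m x)
            calc ‖G m y‖ = ‖G m x + (G m y - G m x)‖ := by ring_nf
              _ ≤ ‖G m x‖ + ‖G m y - G m x‖ := norm_add_le _ _
          have h4 : ‖G m x‖ = P := by
            rw [hGmx, Complex.norm_real, Real.norm_of_nonneg hP0]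
          linarith
        have hterm : ‖(ρ : ℂ) ^ (m + 1) * h m y‖ ≤ ρ ^ (m + 1) := by
          rw [norm_mul, norm_pow, Complex.norm_real, Real.norm_of_nonneg hρ0.le]
          calc ρ ^ (m + 1) * ‖h m y‖ ≤ ρ ^ (m + 1) * ‖h m‖ := by
                gcongr
                exact ContinuousMap.norm_coe_le_norm _ _
            _ ≤ ρ ^ (m + 1) * 1 := by gcongr; exact (hh m).2.1
            _ = ρ ^ (m + 1) := mul_one _
        have hFyb : ‖F y‖ ≤ P + ρ ^ (m + 1) / 2 + ρ ^ (m + 1) + (α / 2) * ρ ^ (m + 2) / (1 - ρ) := by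
          have h1 : F y = ∑ k ∈ Finset.range (m + 1), (ρ : ℂ) ^ (k + 1) * h k y
              + ∑' j : ℕ, (ρ : ℂ) ^ (j + (m + 1) + 1) * h (j + (m + 1)) y := by
            rw [← (hFy y).tsum_eq]
            exact (hsplit).symm
          rw [h1, hhead]
          calc ‖G m y + (ρ : ℂ) ^ (m + 1) * h m y
              + ∑' j : ℕ, (ρ : ℂ) ^ (j + (m + 1) + 1) * h (j + (m + 1)) y‖
              ≤ ‖G m y‖ + ‖(ρ : ℂ) ^ (m + 1) * h m y‖
                + ‖∑' j : ℕ, (ρ : ℂ) ^ (j + (m + 1) + 1) * h (j + (m + 1)) y‖ :=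
                norm_add₃_le
            _ ≤ P + ρ ^ (m + 1) / 2 + ρ ^ (m + 1) + (α / 2) * ρ ^ (m + 2) / (1 - ρ) := by
                have := hGmy; have := hterm; have := htailb
                linarith
        -- s from below
        have hsval : s = P + ρ ^ (m + 1) * α + α * ρ ^ (m + 2) / (1 - ρ) := by
          have h2 : HasSum (fun k : ℕ => ρ ^ (k + 1) * α) s := by
            rw [hsdef]; exact hgeomsum α
          have hsum2 := h2.summable
          have hsplit2 := Summable.sum_add_tsum_nat_add (m + 1) hsum2
          have hheads : ∑ k ∈ Finset.range (m + 1), ρ ^ (k + 1) * α = P + ρ ^ (m + 1) * α := by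
            rw [Finset.sum_range_succ, hPdef]
          have htails : ∑' j : ℕ, ρ ^ (j + (m + 1) + 1) * α = α * ρ ^ (m + 2) / (1 - ρ) := by
            have hts : HasSum (fun j : ℕ => ρ ^ (j + (m + 1) + 1) * α)
                (α * ρ ^ (m + 2) / (1 - ρ)) := by
              have h1 : HasSum (fun j : ℕ => ρ ^ j) (1 - ρ)⁻¹ :=
                hasSum_geometric_of_lt_one hρ0.le hρ1
              have h4 := h1.mul_left (ρ ^ (m + 2) * α)
              have h3 : (fun j : ℕ => ρ ^ (m + 2) * α * ρ ^ j)
                  = fun j : ℕ => ρ ^ (j + (m + 1) + 1) * α := by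
                funext j
                rw [show j + (m + 1) + 1 = j + (m + 2) by omega, pow_add]
                ring
              rw [h3] at h4
              convert h4 using 1
              · rfl
              ring
            exact hts.tsum_eq
          rw [← h2.tsum_eq, ← hsplit2, hheads, htails]
        -- final inequality
        rw [hsval]
        have hpow : 0 < ρ ^ (m + 1) := by positivity
        have hTeq : (α / 2) * ρ ^ (m + 2) / (1 - ρ) = 4 * ρ ^ (m + 2) := by
          rw [hρdef]
          have : 1 - (1 - α / 8) = α / 8 := by ring
          rw [this]
          field_simp
          ring
        have hTeq2 : α * ρ ^ (m + 2) / (1 - ρ) = 8 * ρ ^ (m + 2) := by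
          rw [hρdef]
          have : 1 - (1 - α / 8) = α / 8 := by ring
          rw [this]
          field_simp
        rw [hTeq] at hFyb
        rw [hTeq2]
        have hpow2 : ρ ^ (m + 2) = ρ * ρ ^ (m + 1) := by ring
        -- need: P + ρ^{m+1}/2 + ρ^{m+1} + 4ρ^{m+2} < P + ρ^{m+1}α + 8ρ^{m+2}
        -- i.e. (3/2)ρ^{m+1} < αρ^{m+1} + 4ρ^{m+2} = αρ^{m+1} + 4ρ·ρ^{m+1}
        have hfin : (3 / 2 : ℝ) * ρ ^ (m + 1) < α * ρ ^ (m + 1) + 4 * (ρ * ρ ^ (m + 1)) := by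
          have h4ρ : 4 * ρ ≥ 7 / 2 := by linarith
          nlinarith
        calc ‖F y‖ ≤ P + ρ ^ (m + 1) / 2 + ρ ^ (m + 1) + 4 * ρ ^ (m + 2) := hFyb
          _ < P + ρ ^ (m + 1) * α + 8 * ρ ^ (m + 2) := by
              rw [hpow2]
              nlinarith
      · -- S empty: all h k are small at y
        have hall : ∀ k, ‖h k y‖ ≤ α / 2 := by
          intro k
          exact hsmall k (fun hk => hSne ⟨k, hk⟩)
        have hb : ‖F y‖ ≤ (α / 2) * ρ / (1 - ρ) := by
          rw [← (hFy y).tsum_eq]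
          refine tsum_of_norm_bounded (hgeomsum (α / 2)) ?_
          intro k
          rw [norm_mul, norm_pow, Complex.norm_real, Real.norm_of_nonneg hρ0.le]
          have hk := hall k
          calc ρ ^ (k + 1) * ‖h k y‖ ≤ ρ ^ (k + 1) * (α / 2) := by gcongr
            _ = ρ ^ (k + 1) * (α / 2) := rfl
        have : (α / 2) * ρ / (1 - ρ) < s := by
          rw [hsdef]
          have h1ρ : 0 < 1 - ρ := by linarith
          gcongr
          linarith
        linarith
    -- conclusion
    refine ⟨((s : ℂ))⁻¹ • F, A.smul_mem hFA _, ?_, ?_⟩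
    · simp only [ContinuousMap.smul_apply, smul_eq_mul, hFx]
      rw [inv_mul_cancel₀]
      exact_mod_cast hs0.ne'
    · intro y hy
      simp only [ContinuousMap.smul_apply, smul_eq_mul, norm_mul]
      rw [norm_inv, Complex.norm_real, Real.norm_of_nonneg hs0.le]
      rw [inv_mul_lt_iff₀ hs0, mul_one]
      exact hmain y hy
end

section
/- Let f_n be rational functions, each holomorphic on an open set Ω ⊇ K for a compact set K ⊆ ℂ, converging uniformly on K to F, and suppose each f_n has no poles on K. Then F ∈ R(K), and if z is a point of K possessing a neighbourhood V in ℂ with V ∩ K ⊆ K and F ≠ 0 on V ∩ K while F = 0 on K \ W for some open W with z ∈ V ⊆ W, then F witnesses that J_y ⊄ M_z in R(K) for every y ∈ K \ W̄. -/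
open Filter Set

/-- `R(K)`: the uniform closure, in `C(K, ℂ)`, of the restrictions to `K` of
rational functions with no poles on `K`. -/
def ratClosure (K : Set ℂ) : Set C(K, ℂ) :=
  closure {f : C(K, ℂ) | ∃ p q : Polynomial ℂ,
    (∀ w ∈ K, q.eval w ≠ 0) ∧ ∀ x : K, f x = p.eval (x : ℂ) / q.eval (x : ℂ)}

/-- A uniform limit on a compact set `K` of rational functions holomorphic on a
neighbourhood of `K` with no poles on `K` lies in `R(K)`; moreover if the limit
`F` is nonzero near a point `z` of `K` and vanishes on `K \ W`, then `F`
witnesses `J_y ⊄ M_z` in `R(K)` for every `y ∈ K \ closure W`. -/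
theorem uniform_limit_in_RK_and_continuity_witness
    (K : Set ℂ) (hK : IsCompact K)
    (Ω : Set ℂ) (hΩ : IsOpen Ω) (hKΩ : K ⊆ Ω)
    (f : ℕ → ℂ → ℂ)
    (hrat : ∀ n, ∃ p q : Polynomial ℂ,
      (∀ w ∈ K, q.eval w ≠ 0) ∧ ∀ w ∈ K, f n w = p.eval w / q.eval w)
    (hholo : ∀ n, DifferentiableOn ℂ (f n) Ω)
    (F : ℂ → ℂ) (hconv : TendstoUniformlyOn f F atTop K) :
    ∃ Fc : C(K, ℂ), (∀ x : K, Fc x = F x) ∧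
      Fc ∈ ratClosure K ∧
      ∀ (z : ℂ) (hz : z ∈ K) (V W : Set ℂ), IsOpen W → z ∈ V → V ⊆ W →
        V ∈ nhds z →
        (∀ w ∈ V ∩ K, F w ≠ 0) → (∀ w ∈ K \ W, F w = 0) →
        ∀ y : K, (y : ℂ) ∈ K \ closure W →
          ¬ (∀ g ∈ ratClosure K, (∃ U ∈ nhds y, ∀ w ∈ U, g w = 0) →
              g ⟨z, hz⟩ = 0) := by
  -- continuity of the restrictions
  have hcontn : ∀ n, ContinuousOn (f n) K := by
    intro n
    obtain ⟨p, q, hq, hfn⟩ := hrat n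
    have : ContinuousOn (fun w => p.eval w / q.eval w) K :=
      (p.continuous.continuousOn).div (q.continuous.continuousOn) hq
    exact this.congr hfn
  have hFcont : ContinuousOn F K :=
    hconv.continuousOn (Eventually.of_forall hcontn).frequently
  haveI : CompactSpace K := isCompact_iff_compactSpace.mp hK
  refine ⟨⟨K.restrict F, hFcont.restrict⟩, fun x => rfl, ?_, ?_⟩
  · -- membership in ratClosure
    have hTU : TendstoUniformly (fun n => f n ∘ ((↑) : K → ℂ)) (F ∘ ((↑) : K → ℂ)) atTop :=
      (tendstoUniformlyOn_iff_tendstoUniformly_comp_coe).mp hconv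
    have htend : Tendsto (fun n => (⟨K.restrict (f n), (hcontn n).restrict⟩ : C(K, ℂ)))
        atTop (nhds ⟨K.restrict F, hFcont.restrict⟩) := by
      rw [ContinuousMap.tendsto_iff_tendstoUniformly]
      exact hTU
    refine mem_closure_of_tendsto htend (Eventually.of_forall fun n => ?_)
    obtain ⟨p, q, hq, hfn⟩ := hrat n
    exact ⟨p, q, hq, fun x => hfn x x.2⟩
  · intro z hz V W hW hzV hVW hVnhds hFne hFzero y hy hcon
    have hyK := hy.1
    have hyW : (y : ℂ) ∉ closure W := hy.2
    have hFz : F z ≠ 0 := hFne z ⟨hzV, hz⟩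
    apply hFz
    refine hcon ⟨K.restrict F, hFcont.restrict⟩ ?_ ?_
    · -- same closure membership as above; reuse
      have hTU : TendstoUniformly (fun n => f n ∘ ((↑) : K → ℂ)) (F ∘ ((↑) : K → ℂ)) atTop :=
        (tendstoUniformlyOn_iff_tendstoUniformly_comp_coe).mp hconv
      have htend : Tendsto (fun n => (⟨K.restrict (f n), (hcontn n).restrict⟩ : C(K, ℂ)))
          atTop (nhds ⟨K.restrict F, hFcont.restrict⟩) := by
        rw [ContinuousMap.tendsto_iff_tendstoUniformly]
        exact hTU
      refine mem_closure_of_tendsto htend (Eventually.of_forall fun n => ?_)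
      obtain ⟨p, q, hq, hfn⟩ := hrat n
      exact ⟨p, q, hq, fun x => hfn x x.2⟩
    · refine ⟨(Subtype.val : K → ℂ) ⁻¹' (closure W)ᶜ, ?_, ?_⟩
      · exact (isOpen_compl_iff.mpr isClosed_closure).preimage continuous_subtype_val
          |>.mem_nhds hyW
      · intro w hw
        exact hFzero w ⟨w.2, fun hwW => hw (subset_closure hwW)⟩
end
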